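/- Let ε ∈ (1/(4π), 3/(4π)), so that |2(1 − 2πε)| < 1, i.e. 0 is an attracting fixed point of f_{δ₀}. Then there exist Δ₀ > 0 and λ ∈ (0,1) such that for every Δ with 0 < Δ ≤ Δ₀ and every Borel probability measure μ on 𝕋 whose support is contained in the image of the interval [−Δ, Δ] under the projection ℝ → 𝕋, the measure T_ε μ has support contained in the image of [−λΔ, λΔ]. -/

import Mathlib

open MeasureTheory

/-- The observable `y ↦ cos(2πy)` on the circle `𝕋 = ℝ/ℤ`. -/
noncomputable def cosObs : UnitAddCircle → ℝ :=
  AddCircle.liftIco 1 0 (fun x => Real.cos (2 * Real.pi * x))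

/-- The map `f_μ : 𝕋 → 𝕋` induced by `x ↦ 2(x − ε·sin(2πx)·∫ cos(2πy) dμ(y))`, arising from
mean-field coupled doubling maps with coupling `h(x,y) = sin(2πx)cos(2πy)`. -/
noncomputable def fMu (ε : ℝ) (μ : Measure UnitAddCircle) : UnitAddCircle → UnitAddCircle :=
  AddCircle.liftIco 1 0 (fun x =>
    (↑(2 * (x - ε * Real.sin (2 * Real.pi * x) * ∫ y, cosObs y ∂μ)) : UnitAddCircle))

/-- The self-consistent operator `T_ε μ = (f_μ)_* μ`. -/
noncomputable def Tsc (ε : ℝ) (μ : Measure UnitAddCircle) : Measure UnitAddCircle :=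
  μ.map (fMu ε μ)

/-!
For `μ` supported in `[-Δ, Δ]` the mean field `m = ∫ cos(2πy) dμ(y)` lies in `[cos(2πΔ), 1]`, so
on `[-Δ, Δ]` the lift `x ↦ 2(x - ε m sin(2πx))` of `f_μ` fixes `0` and has derivative
`2(1 - 2πε m cos(2πx))` with `m cos(2πx) ∈ [cos²(2πΔ), 1]`. Its modulus is therefore at most the
larger of `|2(1 - 2πε)|` and `|2(1 - 2πε cos²(2πΔ))|`; the first is `< 1` for the given range
of `ε`, hence so is the second for small `Δ`, and the mean value theorem shrinks `[-Δ, Δ]`.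
-/

open Real Set Filter Topology

namespace AddCircle

variable {𝕜 B : Type*} [AddCommGroup 𝕜] [LinearOrder 𝕜] [IsOrderedAddMonoid 𝕜] [Archimedean 𝕜]
  {p : 𝕜} [hp : Fact (0 < p)] {f : 𝕜 → B}

theorem liftIco_coe_apply_of_periodic (hf : Function.Periodic f p) (a x : 𝕜) :
    liftIco p a f x = f x := by
  have hx : ((toIcoMod hp.out a x : 𝕜) : AddCircle p) = x := by
    rw [← self_sub_toIcoDiv_zsmul hp.out a x, coe_sub, coe_zsmul, coe_period, smul_zero, sub_zero]
  rw [← hx, liftIco_coe_apply (toIcoMod_mem_Ico hp.out a x), ← self_sub_toIcoDiv_zsmul,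
    hf.sub_zsmul_eq]

theorem continuous_liftIco_of_periodic [TopologicalSpace 𝕜] [OrderTopology 𝕜] [TopologicalSpace B]
    (hf : Function.Periodic f p) (hc : Continuous f) (a : 𝕜) : Continuous (liftIco p a f) :=
  liftIco_continuous (hf a).symm hc.continuousOn

end AddCircle

theorem MeasureTheory.Measure.map_compl_eq_zero_of_mapsTo {α β : Type*} [MeasurableSpace α]
    [MeasurableSpace β] {μ : Measure α} {f : α → β} (hf : Measurable f) {s : Set α} {t : Set β}
    (ht : MeasurableSet t) (hst : MapsTo f s t) (hs : μ sᶜ = 0) : μ.map f tᶜ = 0 := by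
  rw [Measure.map_apply hf ht.compl]
  exact measure_mono_null (fun x hx hxs => hx (hst hxs)) hs

theorem Real.cos_two_pi_mul_le_of_mem_Icc {x Δ : ℝ} (hΔ : Δ ≤ 1 / 2) (hx : x ∈ Icc (-Δ) Δ) :
    cos (2 * π * Δ) ≤ cos (2 * π * x) := by
  rw [← cos_abs (2 * π * x), abs_mul, abs_of_pos (by positivity : 0 < 2 * π)]
  exact cos_le_cos_of_nonneg_of_le_pi (by positivity) (by nlinarith [pi_pos])
    (by nlinarith [pi_pos, abs_le.mpr hx])

/-- The lift `ℝ → ℝ` of `f_μ`, with `m = ∫ cos(2πy) dμ(y)`. -/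
noncomputable def coupledDoublingLift (ε m x : ℝ) : ℝ :=
  2 * (x - ε * sin (2 * π * x) * m)

theorem hasDerivAt_coupledDoublingLift (ε m x : ℝ) :
    HasDerivAt (coupledDoublingLift ε m) (2 * (1 - 2 * π * ε * m * cos (2 * π * x))) x := by
  have h := (((hasDerivAt_id' x).const_mul (2 * π)).sin.const_mul ε).mul_const m
  exact (((hasDerivAt_id' x).sub h).const_mul 2).congr_deriv (by ring)

theorem cosObs_coe (x : ℝ) : cosObs x = cos (2 * π * x) :=
  AddCircle.liftIco_coe_apply_of_periodic
    (fun x => by rw [mul_add, mul_one, cos_add_two_pi]) 0 x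

theorem continuous_cosObs : Continuous cosObs :=
  AddCircle.continuous_liftIco_of_periodic (fun x => by rw [mul_add, mul_one, cos_add_two_pi])
    (by fun_prop) 0

theorem coupledDoublingLift_periodic (ε m : ℝ) :
    Function.Periodic (fun x => (coupledDoublingLift ε m x : UnitAddCircle)) 1 := fun x => by
  have h : coupledDoublingLift ε m (x + 1) = coupledDoublingLift ε m x + 1 + 1 := by
    rw [coupledDoublingLift, coupledDoublingLift, mul_add, mul_one, sin_add_two_pi]; ring
  simp only [h, AddCircle.coe_add_period (1 : ℝ)]

theorem fMu_coe (ε : ℝ) (μ : Measure UnitAddCircle) (x : ℝ) :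
    fMu ε μ x = coupledDoublingLift ε (∫ y, cosObs y ∂μ) x :=
  AddCircle.liftIco_coe_apply_of_periodic (coupledDoublingLift_periodic ε _) 0 x

theorem continuous_fMu (ε : ℝ) (μ : Measure UnitAddCircle) : Continuous (fMu ε μ) :=
  AddCircle.continuous_liftIco_of_periodic (coupledDoublingLift_periodic ε _)
    ((AddCircle.continuous_mk' 1).comp (by unfold coupledDoublingLift; fun_prop)) 0

theorem mapsTo_Icc_of_abs_deriv_le {g g' : ℝ → ℝ} {L Δ : ℝ} (hg₀ : g 0 = 0)
    (hg : ∀ x ∈ Icc (-Δ) Δ, HasDerivAt g (g' x) x) (hL : ∀ x ∈ Icc (-Δ) Δ, |g' x| ≤ L) :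
    MapsTo g (Icc (-Δ) Δ) (Icc (-(L * Δ)) (L * Δ)) := by
  intro x hx
  have hΔ : 0 ≤ Δ := by linarith [hx.1, hx.2]
  have h₀ : (0 : ℝ) ∈ Icc (-Δ) Δ := ⟨by linarith, hΔ⟩
  have hL₀ : 0 ≤ L := (abs_nonneg _).trans (hL 0 h₀)
  have hmvt := (convex_Icc (-Δ) Δ).norm_image_sub_le_of_norm_hasDerivWithin_le
    (fun y hy => (hg y hy).hasDerivWithinAt) hL h₀ hx
  simp only [Real.norm_eq_abs, hg₀, sub_zero] at hmvt
  rw [mem_Icc, ← abs_le]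
  exact hmvt.trans (mul_le_mul_of_nonneg_left (abs_le.mpr hx) hL₀)

theorem abs_deriv_coupledDoublingLift_le {ε m c x : ℝ} (hε : 0 ≤ ε) (hc : 0 ≤ c) (hcm : c ≤ m)
    (hm : m ≤ 1) (hx : c ≤ cos (2 * π * x)) :
    |2 * (1 - 2 * π * ε * m * cos (2 * π * x))| ≤
      max |2 * (1 - 2 * π * ε)| |2 * (1 - 2 * π * ε * c ^ 2)| := by
  have hε' : 0 ≤ 2 * π * ε := by positivity
  have hlow : c ^ 2 ≤ m * cos (2 * π * x) := by rw [sq]; exact mul_le_mul hcm hx hc (hc.trans hcm)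
  have hup : m * cos (2 * π * x) ≤ 1 := mul_le_one₀ hm (hc.trans hx) (cos_le_one _)
  apply abs_le_max_abs_abs <;> nlinarith [mul_le_mul_of_nonneg_left hlow hε',
    mul_le_mul_of_nonneg_left hup hε']

theorem integrable_cosObs (μ : Measure UnitAddCircle) [IsFiniteMeasure μ] :
    Integrable cosObs μ :=
  continuous_cosObs.integrable_of_hasCompactSupport (.of_compactSpace _)

theorem integral_cosObs_le_one (μ : Measure UnitAddCircle) [IsProbabilityMeasure μ] :
    ∫ y, cosObs y ∂μ ≤ 1 :=
  calc ∫ y, cosObs y ∂μ ≤ ∫ _, (1 : ℝ) ∂μ :=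
        integral_mono (integrable_cosObs μ) (integrable_const 1) fun q => by
          induction q using QuotientAddGroup.induction_on with
          | H x => rw [cosObs_coe]; exact cos_le_one _
    _ = 1 := by simp

theorem le_integral_cosObs {μ : Measure UnitAddCircle} [IsProbabilityMeasure μ] {s : Set ℝ}
    {c : ℝ} (hμ : μ (((↑) : ℝ → UnitAddCircle) '' s)ᶜ = 0)
    (hc : ∀ x ∈ s, c ≤ cos (2 * π * x)) : c ≤ ∫ y, cosObs y ∂μ := by
  have hae : ∀ᵐ q ∂μ, c ≤ cosObs q := by
    filter_upwards [mem_ae_iff.mpr hμ]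
    rintro _ ⟨x, hx, rfl⟩
    rw [cosObs_coe]; exact hc x hx
  calc c = ∫ _, c ∂μ := by simp
    _ ≤ ∫ y, cosObs y ∂μ := integral_mono_ae (integrable_const c) (integrable_cosObs μ) hae

theorem mapsTo_fMu {ε c L Δ : ℝ} {μ : Measure UnitAddCircle} (hε : 0 ≤ ε) (hc : 0 ≤ c)
    (hcm : c ≤ ∫ y, cosObs y ∂μ) (hm : ∫ y, cosObs y ∂μ ≤ 1)
    (hcos : ∀ x ∈ Icc (-Δ) Δ, c ≤ cos (2 * π * x))
    (hL : max |2 * (1 - 2 * π * ε)| |2 * (1 - 2 * π * ε * c ^ 2)| ≤ L) :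
    MapsTo (fMu ε μ) (((↑) : ℝ → UnitAddCircle) '' Icc (-Δ) Δ)
      (((↑) : ℝ → UnitAddCircle) '' Icc (-(L * Δ)) (L * Δ)) := by
  have hreal := mapsTo_Icc_of_abs_deriv_le (by simp [coupledDoublingLift])
    (fun x _ => hasDerivAt_coupledDoublingLift ε (∫ y, cosObs y ∂μ) x)
    (fun x hx => (abs_deriv_coupledDoublingLift_le hε hc hcm hm (hcos x hx)).trans hL)
  rintro _ ⟨x, hx, rfl⟩
  rw [fMu_coe]
  exact mem_image_of_mem _ (hreal hx)

theorem exists_contraction_scale {ε : ℝ} (hε₁ : 1 / (4 * π) < ε) (hε₂ : ε < 3 / (4 * π)) :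
    ∃ Δ₀ > 0, Δ₀ < 1 / 4 ∧
      max |2 * (1 - 2 * π * ε)| |2 * (1 - 2 * π * ε * cos (2 * π * Δ₀) ^ 2)| < 1 := by
  have h₁ : 1 < ε * (4 * π) := (div_lt_iff₀ (by positivity)).mp hε₁
  have h₂ : ε * (4 * π) < 3 := (lt_div_iff₀ (by positivity)).mp hε₂
  have ha₀ : |2 * (1 - 2 * π * ε)| < 1 := abs_lt.mpr ⟨by linarith, by linarith⟩
  have hcont : Continuous fun Δ : ℝ => |2 * (1 - 2 * π * ε * cos (2 * π * Δ) ^ 2)| := by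
    fun_prop
  have hnear : ∀ᶠ Δ in 𝓝[>] 0, |2 * (1 - 2 * π * ε * cos (2 * π * Δ) ^ 2)| < 1 :=
    nhdsWithin_le_nhds <| hcont.continuousAt.eventually_lt continuousAt_const (by simpa using ha₀)
  obtain ⟨Δ₀, hrate, hpos, hlt⟩ :=
    (hnear.and (Ioo_mem_nhdsGT (by norm_num : (0 : ℝ) < 1 / 4))).exists
  exact ⟨Δ₀, hpos, hlt, max_lt ha₀ hrate⟩

/-- For `ε ∈ (1/(4π), 3/(4π))` there are `Δ₀ > 0` and `λ ∈ (0,1)` such that any probability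
measure supported in the projection of `[−Δ, Δ]` (with `0 < Δ ≤ Δ₀`) is mapped by `T_ε` to a
measure supported in the projection of `[−λΔ, λΔ]`. -/
theorem stmt15 (ε : ℝ) (hε₁ : 1 / (4 * Real.pi) < ε) (hε₂ : ε < 3 / (4 * Real.pi)) :
    ∃ Δ₀ > (0:ℝ), ∃ lam : ℝ, 0 < lam ∧ lam < 1 ∧
      ∀ Δ : ℝ, 0 < Δ → Δ ≤ Δ₀ →
        ∀ μ : Measure UnitAddCircle, IsProbabilityMeasure μ →
          μ (((fun x : ℝ => (x : UnitAddCircle)) '' Set.Icc (-Δ) Δ)ᶜ) = 0 →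
          Tsc ε μ (((fun x : ℝ => (x : UnitAddCircle)) '' Set.Icc (-(lam * Δ)) (lam * Δ))ᶜ) = 0 := by
  obtain ⟨Δ₀, hΔ₀, hΔ₀4, hrate⟩ := exists_contraction_scale hε₁ hε₂
  have hε : 0 ≤ ε := le_trans (by positivity) hε₁.le
  have hc : 0 ≤ cos (2 * π * Δ₀) :=
    cos_nonneg_of_mem_Icc ⟨by nlinarith [pi_pos], by nlinarith [pi_pos]⟩
  -- `max (1 / 2)` only serves to keep `lam` positive
  refine ⟨Δ₀, hΔ₀, _, lt_max_of_lt_left one_half_pos, max_lt one_half_lt_one hrate, ?_⟩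
  intro Δ _ hΔΔ₀ μ _ hsupp
  have hcos : ∀ x ∈ Icc (-Δ) Δ, cos (2 * π * Δ₀) ≤ cos (2 * π * x) := fun x hx =>
    cos_two_pi_mul_le_of_mem_Icc (by linarith) (Icc_subset_Icc (neg_le_neg hΔΔ₀) hΔΔ₀ hx)
  exact Measure.map_compl_eq_zero_of_mapsTo (continuous_fMu ε μ).measurable
    (isCompact_Icc.image (AddCircle.continuous_mk' 1)).isClosed.measurableSet
    (mapsTo_fMu hε hc (le_integral_cosObs hsupp hcos) (integral_cosObs_le_one μ) hcos
      (le_max_right _ _)) hsupp
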